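/- arXiv:1509.05660 — 2 statements merged into one kernel-verified Lean document; each statement's English description precedes it below -/
import Mathlib

section
/- Let G(∘) be a group of even order n and G(∗) another group on G with m(∘,∗) = 2, i.e., some a ∈ G satisfies dist_a(∘,∗) = 2. Then, after possibly swapping ∘ and ∗, the element a has order n in G(∘) and order n/2 in G(∗). In particular one of the two groups is cyclic. -/
/-- The multiplication of a group structure `S` on the set `G`. -/
def mulOf {G : Type*} (S : Group G) : G → G → G := fun a b => letI := S; a * b

/-- `dist_a(∘,∗)`: the number of `b` with `a∘b ≠ a∗b`. -/
def rowDist {G : Type*} [Fintype G] [DecidableEq G] (S T : Group G) (a : G) : ℕ :=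
  (Finset.univ.filter fun b => mulOf S a b ≠ mulOf T a b).card

/-- `dist(∘,∗)`: the number of pairs `(a,b)` with `a∘b ≠ a∗b`. -/
def tableDist {G : Type*} [Fintype G] [DecidableEq G] (S T : Group G) : ℕ :=
  (Finset.univ.filter fun p : G × G => mulOf S p.1 p.2 ≠ mulOf T p.1 p.2).card


/-- The order of `a` in the group structure `S`. -/
noncomputable def ordOf {G : Type*} (S : Group G) (a : G) : ℕ := letI := S; orderOf a

/-! Left multiplications by `a` in the two groups are permutations `f`, `g` of `G` all of whose
orbits have length `σ = |a|_∘`, resp. `τ = |a|_∗`, and which differ at exactly two points `x, y`;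
then necessarily `g x = f y`. If `σ = τ`, the `g`-orbit of `x` shadows the `f`-orbit of `y` until
the latter first returns to `{x, y}`, and either way this closes a `g`-orbit of the wrong length.
If `τ < σ`, every `τ` consecutive points of an `f`-orbit contain a point where `f ≠ g`, so
`n ≤ 2τ`; together with `τ ∣ n` and `τ < σ ∣ n` this forces `σ = n` and `τ = n / 2`. -/

open Finset

namespace Equiv.Perm

variable {α : Type*}

theorem pow_succ_apply_eq_of_agree_on_orbit {f g : Perm α} {x y : α} (hxy : g x = f y) :
    ∀ {k : ℕ}, (∀ i, 0 < i → i ≤ k → g ((f ^ i) y) = f ((f ^ i) y)) →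
      (g ^ (k + 1)) x = (f ^ (k + 1)) y
  | 0, _ => by simpa using hxy
  | k + 1, h => by
    rw [pow_succ', mul_apply,
      pow_succ_apply_eq_of_agree_on_orbit hxy fun i hi hik => h i hi (by omega),
      h (k + 1) k.succ_pos le_rfl, ← mul_apply, ← pow_succ']

variable [Fintype α] [DecidableEq α]

theorem apply_eq_of_filter_ne_eq_pair {f g : Perm α} {x y : α}
    (hD : ({b | f b ≠ g b} : Finset α) = {x, y}) : g x = f y := by
  have hdiff : ∀ b, f b ≠ g b ↔ b = x ∨ b = y := by
    simpa [Finset.ext_iff] using hD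
  obtain ⟨c, hc⟩ := f.surjective (g x)
  have hcx : c ≠ x := by
    rintro rfl
    exact (hdiff c).2 (Or.inl rfl) hc
  obtain rfl : c = y := by
    by_contra hcy
    have hfg : f c = g c := not_not.1 fun h => ((hdiff c).1 h).elim hcx hcy
    exact hcx (g.injective (hfg.symm.trans hc))
  exact hc.symm

theorem card_filter_ne_ne_two_of_periods_eq {f g : Perm α} {σ : ℕ} (hσ : 0 < σ)
    (hf : ∀ k b, (f ^ k) b = b ↔ σ ∣ k) (hg : ∀ k b, (g ^ k) b = b ↔ σ ∣ k) :
    #{b | f b ≠ g b} ≠ 2 := by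
  intro h2
  obtain ⟨x, y, hxy, hD⟩ := card_eq_two.mp h2
  have hreturn : ∃ j, 0 < j ∧ ((f ^ j) y = x ∨ (f ^ j) y = y) :=
    ⟨σ, hσ, Or.inr ((hf σ y).2 dvd_rfl)⟩
  obtain ⟨hj, hjxy⟩ := Nat.find_spec hreturn
  set j := Nat.find hreturn
  have hjσ : j ≤ σ := Nat.find_min' hreturn ⟨hσ, Or.inr ((hf σ y).2 dvd_rfl)⟩
  have hchain : (g ^ j) x = (f ^ j) y := by
    obtain ⟨k, hk⟩ := Nat.exists_eq_add_one_of_ne_zero hj.ne'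
    rw [hk]
    refine pow_succ_apply_eq_of_agree_on_orbit (apply_eq_of_filter_ne_eq_pair hD)
      fun i hi hik => not_not.1 fun hne => Nat.find_min hreturn (show i < j by omega) ⟨hi, ?_⟩
    have : (f ^ i) y ∈ ({b | f b ≠ g b} : Finset α) := by simpa using Ne.symm hne
    simpa [hD] using this
  rcases hjxy with hx | hy
  · have hj_eq : j = σ := le_antisymm hjσ (Nat.le_of_dvd hj ((hg j x).1 (hchain.trans hx)))
    exact hxy (hx.symm.trans ((hf j y).2 (hj_eq ▸ dvd_rfl)))
  · have hj_eq : j = σ := le_antisymm hjσ (Nat.le_of_dvd hj ((hf j y).1 hy))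
    exact hxy (((hg j x).2 (hj_eq ▸ dvd_rfl)).symm.trans (hchain.trans hy))

theorem card_le_mul_card_filter_ne {f g : Perm α} {τ : ℕ} (hg : g ^ τ = 1)
    (hf : ∀ b, (f ^ τ) b ≠ b) : Fintype.card α ≤ τ * #{b | f b ≠ g b} := by
  have hwindow : ∀ b, ∃ k < τ, f ((f ^ k) b) ≠ g ((f ^ k) b) := by
    intro b
    by_contra! h
    have hτ : τ ≠ 0 := by
      rintro rfl
      exact hf b (by simp)
    obtain ⟨k, rfl⟩ := Nat.exists_eq_add_one_of_ne_zero hτ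
    have hchain := pow_succ_apply_eq_of_agree_on_orbit (x := b) (y := b) (k := k)
      (by simpa using (h 0 k.succ_pos).symm) fun i _ hik => (h i (by omega)).symm
    exact hf b (hchain ▸ by rw [hg, one_apply])
  let window (b : α) : ℕ × α := (Nat.find (hwindow b), (f ^ Nat.find (hwindow b)) b)
  have hmaps : Set.MapsTo window (univ : Finset α)
      (range τ ×ˢ ({b | f b ≠ g b} : Finset α) : Finset (ℕ × α)) := by
    intro b _
    obtain ⟨hlt, hne⟩ := Nat.find_spec (hwindow b)
    simp only [window, coe_product, coe_range, coe_filter, Set.mem_prod, Set.mem_Iio,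
      Set.mem_ofPred_eq, mem_univ, true_and]
    exact ⟨hlt, hne⟩
  have hinj : Set.InjOn window (univ : Finset α) := by
    intro b₁ _ b₂ _ h
    simp only [window, Prod.mk.injEq] at h
    obtain ⟨hk, hb⟩ := h
    rw [hk] at hb
    exact (f ^ _).injective hb
  simpa [card_product, mul_comm] using card_le_card_of_injOn window hmaps hinj

end Equiv.Perm

theorem Nat.eq_and_eq_div_two_of_dvd_of_lt {n σ τ : ℕ} (hn : 0 < n) (hσ : σ ∣ n) (hτ : τ ∣ n)
    (hlt : τ < σ) (hle : n ≤ τ * 2) : σ = n ∧ τ = n / 2 := by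
  have hσn : σ ≤ n := Nat.le_of_dvd hn hσ
  obtain ⟨m, rfl⟩ := hτ
  obtain rfl : m = 2 := by
    have : m ≤ 2 := Nat.le_of_mul_le_mul_left hle (by omega)
    interval_cases m <;> omega
  obtain ⟨l, hl⟩ := hσ
  obtain rfl : l = 1 := by
    rcases l with _ | _ | l
    · omega
    · rfl
    · nlinarith
  omega

section LeftMul

variable {G : Type*}

def leftMul (S : Group G) (a : G) : Equiv.Perm G := letI := S; Equiv.mulLeft a

theorem leftMul_pow_apply_eq_self_iff (S : Group G) (a : G) (k : ℕ) (b : G) :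
    (leftMul S a ^ k) b = b ↔ ordOf S a ∣ k := by
  let := S
  simp [leftMul, ordOf, Equiv.pow_mulLeft, orderOf_dvd_iff_pow_eq_one]

theorem leftMul_pow_ordOf (S : Group G) (a : G) : leftMul S a ^ ordOf S a = 1 :=
  Equiv.ext fun b => (leftMul_pow_apply_eq_self_iff S a _ b).2 dvd_rfl

theorem ordOf_pos [Finite G] (S : Group G) (a : G) : 0 < ordOf S a :=
  letI := S; orderOf_pos a

theorem ordOf_dvd_card [Fintype G] (S : Group G) (a : G) : ordOf S a ∣ Fintype.card G :=
  letI := S; orderOf_dvd_card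

variable [Fintype G] [DecidableEq G]

theorem rowDist_comm (S T : Group G) (a : G) : rowDist S T a = rowDist T S a := by
  simp only [rowDist, ne_comm]

theorem ordOf_ne_of_rowDist_eq_two {S T : Group G} {a : G} (ha : rowDist S T a = 2) :
    ordOf S a ≠ ordOf T a := by
  intro h
  refine Equiv.Perm.card_filter_ne_ne_two_of_periods_eq (g := leftMul T a) (ordOf_pos S a)
    (leftMul_pow_apply_eq_self_iff S a) ?_ ha
  simpa only [h] using leftMul_pow_apply_eq_self_iff T a

theorem card_le_ordOf_mul_rowDist {S T : Group G} {a : G} (hlt : ordOf T a < ordOf S a) :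
    Fintype.card G ≤ ordOf T a * rowDist S T a :=
  Equiv.Perm.card_le_mul_card_filter_ne (leftMul_pow_ordOf T a) fun b h =>
    hlt.not_ge (Nat.le_of_dvd (ordOf_pos T a) ((leftMul_pow_apply_eq_self_iff S a _ b).1 h))

theorem ordOf_eq_card_and_eq_half_of_rowDist_eq_two {S T : Group G} {a : G}
    (ha : rowDist S T a = 2) (hlt : ordOf T a < ordOf S a) :
    ordOf S a = Fintype.card G ∧ ordOf T a = Fintype.card G / 2 :=
  Nat.eq_and_eq_div_two_of_dvd_of_lt (Fintype.card_pos_iff.2 ⟨a⟩) (ordOf_dvd_card S a)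
    (ordOf_dvd_card T a) hlt (ha ▸ card_le_ordOf_mul_rowDist hlt)

end LeftMul

theorem m_eq_two_orders_general {G : Type*} [Fintype G] [DecidableEq G] (S T : Group G)
    (a : G) (ha : rowDist S T a = 2) :
    (ordOf S a = Fintype.card G ∧ ordOf T a = Fintype.card G / 2) ∨
    (ordOf T a = Fintype.card G ∧ ordOf S a = Fintype.card G / 2) := by
  rcases (ordOf_ne_of_rowDist_eq_two ha).lt_or_gt with hlt | hgt
  · exact Or.inr (ordOf_eq_card_and_eq_half_of_rowDist_eq_two (rowDist_comm S T a ▸ ha) hlt)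
  · exact Or.inl (ordOf_eq_card_and_eq_half_of_rowDist_eq_two ha hgt)

theorem m_eq_two_orders {G : Type*} [Fintype G] [DecidableEq G] (S T : Group G)
    (hev : Even (Fintype.card G)) (a : G) (ha : rowDist S T a = 2) :
    (ordOf S a = Fintype.card G ∧ ordOf T a = Fintype.card G / 2) ∨
    (ordOf T a = Fintype.card G ∧ ordOf S a = Fintype.card G / 2) :=
  m_eq_two_orders_general S T a ha
end

section
/- Let G(∘), G(∗) be groups on a finite set G of size n with K = {a : dist_a < n/3}. If (a,b) ∈ diff(∘,∗) with a ∈ K and b ∈ K, then a∘b ∉ K and a∗b ∉ K. -/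
open Finset

section Group

variable {G : Type*} (S : Group G)

lemma mulOf_assoc (x y z : G) : mulOf S (mulOf S x y) z = mulOf S x (mulOf S y z) :=
  letI := S; mul_assoc x y z

lemma mulOf_right_cancel {x y z : G} (h : mulOf S x y = mulOf S z y) : x = z :=
  letI := S; mul_right_cancel h

lemma card_filter_mulOf_left [Fintype G] (b : G) (p : G → Prop) [DecidablePred p] :
    #{y | p (mulOf S b y)} = #{y | p y} := by
  let := S
  conv_rhs => rw [← map_univ_equiv (Equiv.mulLeft b), filter_map, card_map]
  rfl

end Group

section TwoGroups

variable {G : Type*} (S T : Group G)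

lemma mulOf_mulOf_eq_of_rows_agree {a b y : G} (hb : mulOf S b y = mulOf T b y)
    (ha : mulOf S a (mulOf S b y) = mulOf T a (mulOf S b y)) :
    mulOf S (mulOf S a b) y = mulOf T (mulOf T a b) y := by
  rw [mulOf_assoc, ha, hb, mulOf_assoc]

variable [Fintype G] [DecidableEq G]

lemma card_le_rowDist_add (a b c : G)
    (hc : ∀ y, mulOf S b y = mulOf T b y → mulOf S a (mulOf S b y) = mulOf T a (mulOf S b y) →
      mulOf S c y ≠ mulOf T c y) :
    Fintype.card G ≤ rowDist S T a + rowDist S T b + rowDist S T c := by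
  set A : Finset G := {y | mulOf S a (mulOf S b y) ≠ mulOf T a (mulOf S b y)}
  set B : Finset G := {y | mulOf S b y ≠ mulOf T b y}
  set C : Finset G := {y | mulOf S c y ≠ mulOf T c y}
  have hcover : univ ⊆ A ∪ B ∪ C := by
    intro y _
    simp only [A, B, C, mem_union, mem_filter, mem_univ, true_and]
    tauto
  have hA : #A = rowDist S T a :=
    card_filter_mulOf_left S b fun z => mulOf S a z ≠ mulOf T a z
  calc Fintype.card G = #(univ : Finset G) := card_univ.symm
    _ ≤ #(A ∪ B ∪ C) := card_le_card hcover
    _ ≤ #(A ∪ B) + #C := card_union_le _ _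
    _ ≤ #A + #B + #C := by grw [card_union_le A B]
    _ = rowDist S T a + rowDist S T b + rowDist S T c := by rw [hA]; rfl

end TwoGroups

theorem S_products_outside_K {G : Type*} [Fintype G] [DecidableEq G] (S T : Group G)
    (a b : G) (hdiff : mulOf S a b ≠ mulOf T a b)
    (ha : 3 * rowDist S T a < Fintype.card G)
    (hb : 3 * rowDist S T b < Fintype.card G) :
    ¬ 3 * rowDist S T (mulOf S a b) < Fintype.card G ∧
    ¬ 3 * rowDist S T (mulOf T a b) < Fintype.card G := by
  have hS := card_le_rowDist_add S T a b (mulOf S a b) fun y hby hay hcy =>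
    hdiff <| mulOf_right_cancel T <| hcy.symm.trans (mulOf_mulOf_eq_of_rows_agree S T hby hay)
  have hT := card_le_rowDist_add S T a b (mulOf T a b) fun y hby hay hcy =>
    hdiff <| mulOf_right_cancel S <| (mulOf_mulOf_eq_of_rows_agree S T hby hay).trans hcy.symm
  omega
end
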